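/- arXiv:2211.16670 — 11 statements merged into one kernel-verified Lean document; each statement's English description precedes it below -/
import Mathlib

section
/- Let u and û be two utility functions on the same finite normal-form game structure and let ε ≥ 0. If |u_p(s) − û_p(s)| ≤ ε for every player p and every pure strategy profile s, then for every γ ≥ 0 it holds that E°_γ(u) ⊆ E°_{2ε+γ}(û) and E°_γ(û) ⊆ E°_{2ε+γ}(u). -/
/-- Expected utility of player `p` under a mixed strategy profile `σ`
(each `σ i : S i → ℝ` is a distribution over player `i`'s pure strategies). -/
noncomputable def expUtil {ι : Type*} {S : ι → Type*} [DecidableEq ι] [Fintype ι]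
    [∀ i, Fintype (S i)]
    (u : ι → (∀ q, S q) → ℝ) (p : ι) (σ : ∀ i, S i → ℝ) : ℝ :=
  ∑ s : ∀ q, S q, (∏ q, σ q (s q)) * u p s

/-- Regret of player `p` at mixed strategy profile `σ` under utility function `u`:
the gap between the best pure deviation of `p` and the current expected utility. -/
noncomputable def RegM {ι : Type*} {S : ι → Type*} [DecidableEq ι] [Fintype ι]
    [∀ i, Fintype (S i)] [∀ i, Nonempty (S i)] [∀ i, DecidableEq (S i)]
    (u : ι → (∀ q, S q) → ℝ) (p : ι) (σ : ∀ i, S i → ℝ) : ℝ :=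
  (⨆ t : S p,
      expUtil u p (Function.update σ p (fun t' => if t' = t then (1 : ℝ) else 0))) -
    expUtil u p σ

/-- `σ` is a valid mixed strategy profile: nonnegative weights summing to one
for each player. -/
def IsMixed {ι : Type*} {S : ι → Type*} [∀ i, Fintype (S i)]
    (σ : ∀ i, S i → ℝ) : Prop :=
  (∀ i t, 0 ≤ σ i t) ∧ ∀ i, ∑ t, σ i t = 1

/-- The set of `γ`-mixed Nash equilibria of the utility function `u`. -/
noncomputable def MNE {ι : Type*} {S : ι → Type*} [DecidableEq ι] [Fintype ι]
    [∀ i, Fintype (S i)] [∀ i, Nonempty (S i)] [∀ i, DecidableEq (S i)]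
    (u : ι → (∀ q, S q) → ℝ) (γ : ℝ) : Set (∀ i, S i → ℝ) :=
  {σ | IsMixed σ ∧ ∀ p, RegM u p σ ≤ γ}

/-! Expected utility is an average of pure-profile utilities with weights `∏ q, σ q (s q)` summing
to one, so an `ε`-perturbation of `u` moves every expected utility, and in particular the best
pure deviation and the current payoff, by at most `ε`; hence each regret moves by at most `2ε`. -/

section

open Finset

variable {ι : Type*} {S : ι → Type*} [∀ i, Fintype (S i)]

/-- The profile `σ|_t`. -/
def pureDeviation [DecidableEq ι] [∀ i, DecidableEq (S i)] (σ : ∀ i, S i → ℝ) (p : ι) (t : S p) :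
    ∀ i, S i → ℝ :=
  Function.update σ p (fun t' => if t' = t then (1 : ℝ) else 0)

namespace IsMixed

theorem sum_prod_eq_one [DecidableEq ι] [Fintype ι] {σ : ∀ i, S i → ℝ} (hσ : IsMixed σ) :
    ∑ s : ∀ q, S q, ∏ q, σ q (s q) = 1 := by
  rw [← Fintype.prod_sum, Fintype.prod_eq_one _ hσ.2]

theorem pureDeviation [DecidableEq ι] [∀ i, DecidableEq (S i)] {σ : ∀ i, S i → ℝ}
    (hσ : IsMixed σ) (p : ι) (t : S p) : IsMixed (pureDeviation σ p t) := by
  unfold _root_.pureDeviation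
  constructor
  · intro i t'
    rcases eq_or_ne i p with rfl | hi
    · simp only [Function.update_self]
      split_ifs <;> norm_num
    · exact Function.update_of_ne hi _ σ ▸ hσ.1 i t'
  · intro i
    rcases eq_or_ne i p with rfl | hi
    · simp
    · exact Function.update_of_ne hi _ σ ▸ hσ.2 i

end IsMixed

variable [DecidableEq ι] [Fintype ι]

theorem expUtil_le_add_of_le {u v : ι → (∀ q, S q) → ℝ} {p : ι} {ε : ℝ} {σ : ∀ i, S i → ℝ}
    (hσ : IsMixed σ) (h : ∀ s, u p s ≤ v p s + ε) :
    expUtil u p σ ≤ expUtil v p σ + ε :=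
  calc expUtil u p σ ≤ ∑ s : ∀ q, S q, (∏ q, σ q (s q)) * (v p s + ε) :=
        sum_le_sum fun s _ => mul_le_mul_of_nonneg_left (h s) (prod_nonneg fun q _ => hσ.1 q _)
    _ = expUtil v p σ + ε := by
        simp only [mul_add, sum_add_distrib, ← sum_mul, hσ.sum_prod_eq_one, one_mul, expUtil]

variable [∀ i, Nonempty (S i)] [∀ i, DecidableEq (S i)]

theorem RegM_eq_iSup_sub (u : ι → (∀ q, S q) → ℝ) (p : ι) (σ : ∀ i, S i → ℝ) :
    RegM u p σ = (⨆ t, expUtil u p (pureDeviation σ p t)) - expUtil u p σ :=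
  rfl

theorem RegM_le_RegM_add {u uh : ι → (∀ q, S q) → ℝ} {p : ι} {ε : ℝ} {σ : ∀ i, S i → ℝ}
    (hσ : IsMixed σ) (h : ∀ s, |u p s - uh p s| ≤ ε) :
    RegM uh p σ ≤ RegM u p σ + 2 * ε := by
  have h_uh_le : ∀ s, uh p s ≤ u p s + ε := fun s => by linarith [(abs_le.mp (h s)).1]
  have h_u_le : ∀ s, u p s ≤ uh p s + ε := fun s => by linarith [(abs_le.mp (h s)).2]
  have h_bdd : BddAbove (Set.range fun t => expUtil u p (pureDeviation σ p t)) :=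
    (Set.finite_range _).bddAbove
  have h_best : (⨆ t, expUtil uh p (pureDeviation σ p t)) ≤
      (⨆ t, expUtil u p (pureDeviation σ p t)) + ε :=
    ciSup_le fun t => (expUtil_le_add_of_le (hσ.pureDeviation p t) h_uh_le).trans <|
      add_le_add_left (le_ciSup h_bdd t) ε
  have h_current := expUtil_le_add_of_le hσ h_u_le
  rw [RegM_eq_iSup_sub, RegM_eq_iSup_sub]
  linarith

theorem MNE_subset_MNE {u uh : ι → (∀ q, S q) → ℝ} {ε γ : ℝ}
    (h : ∀ p s, |u p s - uh p s| ≤ ε) :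
    MNE u γ ⊆ MNE uh (2 * ε + γ) := fun σ ⟨hσ, hreg⟩ =>
  ⟨hσ, fun p => by linarith [RegM_le_RegM_add (uh := uh) hσ (h p), hreg p]⟩

end

theorem mixed_dual_containment_general {ι : Type*} {S : ι → Type*}
    [DecidableEq ι] [Fintype ι]
    [∀ i, Fintype (S i)] [∀ i, Nonempty (S i)] [∀ i, DecidableEq (S i)]
    (u uh : ι → (∀ q, S q) → ℝ) (ε : ℝ)
    (h : ∀ (p : ι) (s : ∀ q, S q), |u p s - uh p s| ≤ ε) :
    ∀ γ : ℝ, 0 ≤ γ →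
      MNE u γ ⊆ MNE uh (2 * ε + γ) ∧ MNE uh γ ⊆ MNE u (2 * ε + γ) :=
  fun _ _ => ⟨MNE_subset_MNE h, MNE_subset_MNE fun p s => abs_sub_comm (u p s) _ ▸ h p s⟩

/-- If all utilities are estimated to within `ε`, then for every `γ ≥ 0`,
`E°_γ(u) ⊆ E°_{2ε+γ}(û)` and `E°_γ(û) ⊆ E°_{2ε+γ}(u)`. -/
theorem mixed_dual_containment {ι : Type*} {S : ι → Type*}
    [DecidableEq ι] [Fintype ι] [Nonempty ι]
    [∀ i, Fintype (S i)] [∀ i, Nonempty (S i)] [∀ i, DecidableEq (S i)]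
    (u uh : ι → (∀ q, S q) → ℝ) (ε : ℝ) (hε : 0 ≤ ε)
    (h : ∀ (p : ι) (s : ∀ q, S q), |u p s - uh p s| ≤ ε) :
    ∀ γ : ℝ, 0 ≤ γ →
      MNE u γ ⊆ MNE uh (2 * ε + γ) ∧ MNE uh γ ⊆ MNE u (2 * ε + γ) :=
  mixed_dual_containment_general u uh ε h
end

section
/- Let u and û be two utility functions on the same finite normal-form game structure, let γ* ≥ 0 and ε ≥ 0. If |u_p(s) − û_p(s)| ≤ ε for every player p and profile s satisfying Reg_p(s; u) = 0 or Reg_p(s; û) ≤ γ*, then E(u) ⊆ E_{2ε}(û), and for every γ with 0 ≤ γ ≤ γ* it holds that E_γ(û) ⊆ E_{2ε+γ}(u). -/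
/-- Regret of player `p` at pure strategy profile `s` under utility function `u`. -/
noncomputable def Reg {ι : Type*} {S : ι → Type*} [DecidableEq ι]
    [∀ i, Fintype (S i)] [∀ i, Nonempty (S i)]
    (u : ι → (∀ q, S q) → ℝ) (p : ι) (s : ∀ q, S q) : ℝ :=
  (⨆ t : S p, u p (Function.update s p t)) - u p s

/-- The set of `γ`-pure Nash equilibria of the utility function `u`. -/
noncomputable def PNE {ι : Type*} {S : ι → Type*} [DecidableEq ι]
    [∀ i, Fintype (S i)] [∀ i, Nonempty (S i)]
    (u : ι → (∀ q, S q) → ℝ) (γ : ℝ) : Set (∀ q, S q) :=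
  {s | ∀ p, Reg u p s ≤ γ}

lemma ciSup_eq_max {α : Type*} [Fintype α] [Nonempty α] (f : α → ℝ) :
    ∃ t, (⨆ t', f t') = f t ∧ ∀ t', f t' ≤ f t := by
  obtain ⟨t, ht⟩ := Finite.exists_max f
  refine ⟨t, le_antisymm (ciSup_le ht) (le_ciSup (Finite.bddAbove_range f) t), ht⟩

lemma reg_nonneg {ι : Type*} {S : ι → Type*} [DecidableEq ι]
    [∀ i, Fintype (S i)] [∀ i, Nonempty (S i)]
    (u : ι → (∀ q, S q) → ℝ) (p : ι) (s : ∀ q, S q) : 0 ≤ Reg u p s := by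
  have := le_ciSup (Finite.bddAbove_range fun t => u p (Function.update s p t)) (s p)
  simp only [Function.update_eq_self] at this
  simpa [Reg] using this

/-- The argmax deviation has zero regret. -/
lemma exists_argmax {ι : Type*} {S : ι → Type*} [DecidableEq ι]
    [∀ i, Fintype (S i)] [∀ i, Nonempty (S i)]
    (u : ι → (∀ q, S q) → ℝ) (p : ι) (s : ∀ q, S q) :
    ∃ t : S p, (⨆ t', u p (Function.update s p t')) = u p (Function.update s p t) ∧
      Reg u p (Function.update s p t) = 0 := by
  obtain ⟨t, ht, hmax⟩ := ciSup_eq_max (fun t => u p (Function.update s p t))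
  refine ⟨t, ht, ?_⟩
  have : (⨆ t' : S p, u p (Function.update (Function.update s p t) p t'))
      = ⨆ t' : S p, u p (Function.update s p t') := by
    simp [Function.update_idem]
  simp [Reg, this, ht]

/-- If all indices with zero true regret or with empirical regret at most `γ*` are
estimated to within `ε`, then `E(u) ⊆ E_{2ε}(û)` and `E_γ(û) ⊆ E_{2ε+γ}(u)` for
all `0 ≤ γ ≤ γ*`. -/
theorem new_dual_containment {ι : Type*} {S : ι → Type*}
    [DecidableEq ι] [Fintype ι] [Nonempty ι]
    [∀ i, Fintype (S i)] [∀ i, Nonempty (S i)]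
    (u uh : ι → (∀ q, S q) → ℝ) (γstar ε : ℝ) (hγstar : 0 ≤ γstar) (hε : 0 ≤ ε)
    (h : ∀ (p : ι) (s : ∀ q, S q),
      (Reg u p s = 0 ∨ Reg uh p s ≤ γstar) → |u p s - uh p s| ≤ ε) :
    PNE u 0 ⊆ PNE uh (2 * ε) ∧
      ∀ γ : ℝ, 0 ≤ γ → γ ≤ γstar → PNE uh γ ⊆ PNE u (2 * ε + γ) := by
  constructor
  · intro s hs p
    have hreg0 : Reg u p s = 0 := le_antisymm (hs p) (reg_nonneg u p s)
    obtain ⟨t, ht, hreg'⟩ := exists_argmax uh p s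
    have h1 : |u p s - uh p s| ≤ ε := h p s (Or.inl hreg0)
    have h2 : |u p (Function.update s p t) - uh p (Function.update s p t)| ≤ ε :=
      h p (Function.update s p t) (Or.inr (hreg'.le.trans hγstar))
    -- u p (update s p t) ≤ u p s since Reg u p s = 0
    have h3 : u p (Function.update s p t) ≤ u p s := by
      have hle : u p (Function.update s p t)
          ≤ ⨆ t' : S p, u p (Function.update s p t') :=
        le_ciSup (Finite.bddAbove_range _) t (f := fun t' => u p (Function.update s p t'))
      have : (⨆ t' : S p, u p (Function.update s p t')) = u p s := by
        have := hreg0; unfold Reg at this; linarith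
      linarith
    rw [abs_le] at h1 h2
    unfold Reg
    rw [ht]
    linarith [h1.1, h1.2, h2.1, h2.2]
  · intro γ hγ0 hγ s hs p
    have hregs : Reg uh p s ≤ γstar := (hs p).trans hγ
    obtain ⟨t, ht, hreg'⟩ := exists_argmax u p s
    have h1 : |u p s - uh p s| ≤ ε := h p s (Or.inr hregs)
    have h2 : |u p (Function.update s p t) - uh p (Function.update s p t)| ≤ ε :=
      h p (Function.update s p t) (Or.inl hreg')
    have h3 : uh p (Function.update s p t) - uh p s ≤ γ := by
      have hle : uh p (Function.update s p t)
          ≤ ⨆ t' : S p, uh p (Function.update s p t') :=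
        le_ciSup (Finite.bddAbove_range _) t (f := fun t' => uh p (Function.update s p t'))
      have := hs p; unfold Reg at this; linarith
    rw [abs_le] at h1 h2
    unfold Reg
    rw [ht]
    linarith [h1.1, h1.2, h2.1, h2.2]
end

section
/- Let u and û be two utility functions on the same finite normal-form game structure and let ε > 0. If |u_p(s) − û_p(s)| ≤ max{ε, Reg_p(s; û)/2} for every player p and every pure strategy profile s, then every player p and profile s with Reg_p(s; u) = 0 satisfy |u_p(s) − û_p(s)| ≤ ε. -/
/-- If all utilities are estimated to within `max{ε, Reg_p(s; û)/2}`, then every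
index with zero true regret is estimated to within `ε`. -/
theorem zero_regret_well_estimated {ι : Type*} {S : ι → Type*}
    [DecidableEq ι] [Fintype ι] [Nonempty ι]
    [∀ i, Fintype (S i)] [∀ i, Nonempty (S i)]
    (u uh : ι → (∀ q, S q) → ℝ) (ε : ℝ) (hε : 0 < ε)
    (h : ∀ (p : ι) (s : ∀ q, S q), |u p s - uh p s| ≤ max ε (Reg uh p s / 2)) :
    ∀ (p : ι) (s : ∀ q, S q), Reg u p s = 0 → |u p s - uh p s| ≤ ε := by
  intro p s hreg
  rcases le_or_gt (Reg uh p s / 2) ε with hle | hlt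
  · have := h p s; rwa [max_eq_left hle] at this
  · obtain ⟨t, ht⟩ := Finite.exists_max (fun t : S p => uh p (Function.update s p t))
    set s' := Function.update s p t with hs'
    have hsup : (⨆ t' : S p, uh p (Function.update s p t')) = uh p s' := by
      rw [hs']
      exact le_antisymm (ciSup_le ht) (le_ciSup (f := fun t' : S p => uh p (Function.update s p t')) (Set.finite_range _).bddAbove t)
    have hupd : ∀ t' : S p, Function.update s' p t' = Function.update s p t' := by
      intro t'; simp [hs', Function.update_idem]
    have hreg' : Reg uh p s' = 0 := by
      unfold Reg
      simp only [hupd]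
      rw [hsup]; ring
    have h1 : |u p s' - uh p s'| ≤ ε := by
      have := h p s'; rwa [hreg', zero_div, max_eq_left hε.le] at this
    have hus : u p s' ≤ u p s := by
      have hsup2 : (⨆ t' : S p, u p (Function.update s p t')) = u p s := by
        have h0 := hreg; unfold Reg at h0; linarith
      calc u p s' ≤ ⨆ t' : S p, u p (Function.update s p t') := by
            rw [hs']; exact le_ciSup (f := fun t' : S p => u p (Function.update s p t')) (Set.finite_range _).bddAbove t
        _ = u p s := hsup2
    have hR : uh p s' = uh p s + Reg uh p s := by
      unfold Reg; rw [hsup]; ring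
    have h2 := h p s
    rw [max_eq_right hlt.le] at h2
    have h3 := abs_le.mp h2
    have h4 := abs_le.mp h1
    linarith [h3.2, h4.1]
end

section
/- Let u and û be two utility functions on the same finite normal-form game structure and let ε > 0. If |u_p(s) − û_p(s)| ≤ max{ε, Reg_p(s; û)/2} for every player p and every pure strategy profile s, then |u_p(s) − û_p(s)| ≤ ε for every player p and profile s satisfying Reg_p(s; u) = 0 or Reg_p(s; û) ≤ 2ε. (That is, the hypothesis of the mixed-and-pure containment lemma implies the hypothesis of the pure containment lemma with γ* = 2ε.) -/
/-- The hypothesis of the mixed-and-pure containment lemma implies the hypothesis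
of the pure containment lemma with `γ* = 2ε`. -/
theorem middle_condition_implies_new_condition {ι : Type*} {S : ι → Type*}
    [DecidableEq ι] [Fintype ι] [Nonempty ι]
    [∀ i, Fintype (S i)] [∀ i, Nonempty (S i)]
    (u uh : ι → (∀ q, S q) → ℝ) (ε : ℝ) (hε : 0 < ε)
    (h : ∀ (p : ι) (s : ∀ q, S q), |u p s - uh p s| ≤ max ε (Reg uh p s / 2)) :
    ∀ (p : ι) (s : ∀ q, S q),
      (Reg u p s = 0 ∨ Reg uh p s ≤ 2 * ε) → |u p s - uh p s| ≤ ε := by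
  intro p s hcase
  have key : ∀ s : (∀ q, S q), Reg uh p s ≤ 2 * ε → |u p s - uh p s| ≤ ε := by
    intro s hs
    refine (h p s).trans (max_le le_rfl (by linarith))
  rcases hcase with h0 | h2
  · apply key
    by_contra hgt
    push_neg at hgt
    obtain ⟨t, ht⟩ := Finite.exists_max (fun t : S p => uh p (Function.update s p t))
    have hsup : (⨆ r : S p, uh p (Function.update s p r)) = uh p (Function.update s p t) :=
      le_antisymm (ciSup_le ht) (le_ciSup (Finite.bddAbove_range (fun r : S p => uh p (Function.update s p r))) t)
    set s' := Function.update s p t with hs'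
    -- Reg uh p s' = 0
    have hupd : ∀ r : S p, Function.update s' p r = Function.update s p r := by
      intro r
      rw [hs']
      exact Function.update_idem ..
    have hreg' : Reg uh p s' = 0 := by
      unfold Reg
      have : (⨆ r : S p, uh p (Function.update s' p r)) = uh p s' := by
        simp only [hupd]; rw [hsup]
      rw [this]; ring
    -- u p s' ≤ u p s
    have hle : u p s' ≤ u p s := by
      have h1 : u p s' ≤ ⨆ r : S p, u p (Function.update s p r) :=
        le_ciSup (Finite.bddAbove_range (fun r : S p => u p (Function.update s p r))) t
      unfold Reg at h0
      linarith
    have hRs : Reg uh p s = uh p s' - uh p s := by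
      unfold Reg; rw [hsup]
    have hA := h p s'
    rw [hreg'] at hA
    have hA' : |u p s' - uh p s'| ≤ ε := by
      refine hA.trans (max_le le_rfl (by linarith))
    have hB := h p s
    have hB' : |u p s - uh p s| ≤ Reg uh p s / 2 := by
      refine hB.trans (max_le (by linarith) le_rfl)
    rw [abs_le] at hA' hB'
    linarith [hA'.1, hA'.2, hB'.1, hB'.2]
  · exact key s h2
end

section
/- Let u and û be two utility functions on the same finite normal-form game structure, fix a player p and a pure profile s, let ε_p(s') ≥ 0 be error bounds for each s' ∈ Adj_{p,s}, and let γ* ≥ 0 and ε' ≥ 0. Suppose |u_p(s') − û_p(s')| ≤ ε_p(s') for every s' ∈ Adj_{p,s}, and suppose s* ∈ Adj_{p,s} is a maximizer of u_p over Adj_{p,s} with û_p(s*) ≥ u_p(s*) − ε'. If Reg↓_p(s; û, ε) > γ* + ε' − ε_p(s), then Reg_p(s; û) > γ*. -/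
/-- Empirical regret lower bound with error bounds `εb`. -/
noncomputable def RegLow {ι : Type*} {S : ι → Type*} [DecidableEq ι]
    [∀ i, Fintype (S i)] [∀ i, Nonempty (S i)]
    (uh : ι → (∀ q, S q) → ℝ) (εb : ι → (∀ q, S q) → ℝ)
    (p : ι) (s : ∀ q, S q) : ℝ :=
  (⨆ t : S p, (uh p (Function.update s p t) - εb p (Function.update s p t))) -
    (uh p s + εb p s)

/-- If the empirical regret lower bound exceeds `γ* + ε' − ε_p(s)`, where the true
best response is underestimated by at most `ε'`, then the empirical regret
exceeds `γ*`. -/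
theorem regLow_criterion_empirical_regret {ι : Type*} {S : ι → Type*}
    [DecidableEq ι] [Fintype ι] [Nonempty ι]
    [∀ i, Fintype (S i)] [∀ i, Nonempty (S i)]
    (u uh : ι → (∀ q, S q) → ℝ) (εb : ι → (∀ q, S q) → ℝ)
    (p : ι) (s : ∀ q, S q) (γstar ε' : ℝ) (hγ : 0 ≤ γstar) (hε' : 0 ≤ ε')
    (hεb : ∀ s' : ∀ q, S q, (∀ q, q ≠ p → s' q = s q) → 0 ≤ εb p s')
    (h : ∀ s' : ∀ q, S q, (∀ q, q ≠ p → s' q = s q) → |u p s' - uh p s'| ≤ εb p s')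
    (tstar : S p)
    (hmax : ∀ t : S p, u p (Function.update s p t) ≤ u p (Function.update s p tstar))
    (hstar : u p (Function.update s p tstar) - ε' ≤ uh p (Function.update s p tstar))
    (hcrit : γstar + ε' - εb p s < RegLow uh εb p s) :
    γstar < Reg uh p s := by
  have hb : ∀ t : S p, uh p (Function.update s p t) - εb p (Function.update s p t) ≤
      u p (Function.update s p t) := by
    intro t
    have := h (Function.update s p t) (fun q hq => Function.update_of_ne hq _ _)
    rw [abs_le] at this
    linarith [this.1]
  have h1 : (⨆ t : S p, (uh p (Function.update s p t) - εb p (Function.update s p t))) ≤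
      u p (Function.update s p tstar) := ciSup_le fun t => (hb t).trans (hmax t)
  have h2 : uh p (Function.update s p tstar) ≤ ⨆ t : S p, uh p (Function.update s p t) :=
    le_ciSup (Set.Finite.bddAbove (Set.finite_range (fun t : S p => uh p (Function.update s p t)))) tstar
  unfold RegLow at hcrit
  unfold Reg
  linarith
end

section
/- Let u and û be two utility functions on the same finite normal-form game structure, fix a player p and a pure profile s, let ε_p(s') ≥ 0 be error bounds for each s' ∈ Adj_{p,s}, and let ε' ≥ 0. Suppose |u_p(s') − û_p(s')| ≤ ε_p(s') for every s' ∈ Adj_{p,s}, and suppose s* ∈ Adj_{p,s} is a maximizer of u_p over Adj_{p,s} with û_p(s*) ≥ u_p(s*) − ε'. If Reg↓_p(s; û, ε) > ε' + ε_p(s), then Reg_p(s; û) > 2ε_p(s); consequently |u_p(s) − û_p(s)| < Reg_p(s; û)/2. -/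
/-- If the empirical regret lower bound exceeds `ε' + ε_p(s)`, where the true best
response is underestimated by at most `ε'`, then the empirical regret at `s`
exceeds `2ε_p(s)`, and consequently the estimation error at `(p, s)` is below
half the empirical regret. -/
theorem regLow_criterion_half_regret {ι : Type*} {S : ι → Type*}
    [DecidableEq ι] [Fintype ι] [Nonempty ι]
    [∀ i, Fintype (S i)] [∀ i, Nonempty (S i)]
    (u uh : ι → (∀ q, S q) → ℝ) (εb : ι → (∀ q, S q) → ℝ)
    (p : ι) (s : ∀ q, S q) (ε' : ℝ) (hε' : 0 ≤ ε')
    (hεb : ∀ s' : ∀ q, S q, (∀ q, q ≠ p → s' q = s q) → 0 ≤ εb p s')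
    (h : ∀ s' : ∀ q, S q, (∀ q, q ≠ p → s' q = s q) → |u p s' - uh p s'| ≤ εb p s')
    (tstar : S p)
    (hmax : ∀ t : S p, u p (Function.update s p t) ≤ u p (Function.update s p tstar))
    (hstar : u p (Function.update s p tstar) - ε' ≤ uh p (Function.update s p tstar))
    (hcrit : ε' + εb p s < RegLow uh εb p s) :
    2 * εb p s < Reg uh p s ∧ |u p s - uh p s| < Reg uh p s / 2 := by
  have hs : ∀ q, q ≠ p → s q = s q := fun _ _ => rfl
  have hupd : ∀ t : S p, ∀ q, q ≠ p → Function.update s p t q = s q := by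
    intro t q hq; simp [Function.update, hq]
  have bdd1 : BddAbove (Set.range fun t : S p => uh p (Function.update s p t)) :=
    Set.Finite.bddAbove (Set.finite_range _)
  have key : (⨆ t : S p, (uh p (Function.update s p t) - εb p (Function.update s p t)))
      ≤ (⨆ t : S p, uh p (Function.update s p t)) + ε' := by
    apply ciSup_le
    intro t
    have h1 := abs_le.mp (h _ (hupd t))
    have h2 := hmax t
    have h5 : uh p (Function.update s p tstar) ≤ ⨆ t : S p, uh p (Function.update s p t) :=
      le_ciSup bdd1 tstar
    linarith [h1.1, h1.2]
  have hReg : 2 * εb p s < Reg uh p s := by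
    unfold RegLow at hcrit
    unfold Reg
    linarith
  refine ⟨hReg, ?_⟩
  exact lt_of_le_of_lt (h s hs) (by linarith)
end

section
/- Let u and û be two utility functions on the same finite normal-form game structure, fix a player p and a pure profile s, let ε_p(s') ≥ 0 be error bounds for each s' ∈ Adj_{p,s}, and let γ* ≥ 0 and ε ≥ 0. Suppose |u_p(s') − û_p(s')| ≤ ε_p(s') for every s' ∈ Adj_{p,s}, that ε ≤ max_{s' ∈ Adj_{p,s}} ε_p(s'), and that 4 · max_{s' ∈ Adj_{p,s}} ε_p(s') < Reg_p(s; u) − γ*. Then Reg↓_p(s; û, ε) > max{0, γ* + ε − ε_p(s)}. -/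
/-- If four times the largest adjacent error bound is below `Reg_p(s; u) − γ*`
(and `ε` is at most the largest adjacent error bound), then the PS-REG+
regret-pruning criterion `Reg↓ > max{0, γ* + ε − ε_p(s)}` is triggered. -/
theorem psregplus_pruning_triggered {ι : Type*} {S : ι → Type*}
    [DecidableEq ι] [Fintype ι] [Nonempty ι]
    [∀ i, Fintype (S i)] [∀ i, Nonempty (S i)]
    (u uh : ι → (∀ q, S q) → ℝ) (εb : ι → (∀ q, S q) → ℝ)
    (p : ι) (s : ∀ q, S q) (γstar ε : ℝ) (hγ : 0 ≤ γstar) (hε : 0 ≤ ε)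
    (hεb : ∀ s' : ∀ q, S q, (∀ q, q ≠ p → s' q = s q) → 0 ≤ εb p s')
    (h : ∀ s' : ∀ q, S q, (∀ q, q ≠ p → s' q = s q) → |u p s' - uh p s'| ≤ εb p s')
    (hεsup : ε ≤ ⨆ t : S p, εb p (Function.update s p t))
    (hgap : 4 * (⨆ t : S p, εb p (Function.update s p t)) < Reg u p s - γstar) :
    max 0 (γstar + ε - εb p s) < RegLow uh εb p s := by
  have hbdd : ∀ (g : S p → ℝ), BddAbove (Set.range g) :=
    fun g => Set.Finite.bddAbove (Set.finite_range g)
  have hadj : ∀ t : S p, ∀ q, q ≠ p → Function.update s p t q = s q :=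
    fun t q hq => Function.update_of_ne hq _ _
  have hsadj : ∀ q, q ≠ p → s q = s q := fun q _ => rfl
  have hεbs : εb p s ≤ ⨆ t : S p, εb p (Function.update s p t) := by
    have := le_ciSup (hbdd fun t => εb p (Function.update s p t)) (s p)
    rwa [Function.update_eq_self] at this
  have hE0 : 0 ≤ ⨆ t : S p, εb p (Function.update s p t) :=
    le_trans (hεb s hsadj) hεbs
  obtain ⟨t0, ht0⟩ := Finite.exists_max (fun t : S p => u p (Function.update s p t))
  have hM : (⨆ t : S p, u p (Function.update s p t)) ≤ u p (Function.update s p t0) :=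
    ciSup_le ht0
  have h1 : uh p (Function.update s p t0) - εb p (Function.update s p t0) ≤
      ⨆ t : S p, (uh p (Function.update s p t) - εb p (Function.update s p t)) :=
    le_ciSup (hbdd fun t : S p => uh p (Function.update s p t) - εb p (Function.update s p t)) t0
  have h2 := h _ (hadj t0)
  rw [abs_le] at h2
  have h3 := h s hsadj
  rw [abs_le] at h3
  have hεt0 : εb p (Function.update s p t0) ≤ ⨆ t : S p, εb p (Function.update s p t) :=
    le_ciSup (hbdd fun t : S p => εb p (Function.update s p t)) t0
  unfold Reg at hgap
  unfold RegLow
  rcases max_cases 0 (γstar + ε - εb p s) with ⟨he, _⟩ | ⟨he, _⟩ <;> rw [he] <;> linarith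
end

section
/- Let u and û be two utility functions on the same finite normal-form game structure, fix a player p and a pure profile s, let ε_p(s') ≥ 0 be error bounds for each s' ∈ Adj_{p,s}, and let ε ≥ 0. Suppose |u_p(s') − û_p(s')| ≤ ε_p(s') for every s' ∈ Adj_{p,s}, and that 5 · max_{s' ∈ Adj_{p,s}} ε_p(s') < Reg_p(s; u) − ε. Then Reg↓_p(s; û, ε) > ε + ε_p(s). -/
/-- If five times the largest adjacent error bound is below `Reg_p(s; u) − ε`,
then the PS-REG-M regret-pruning criterion `Reg↓ > ε + ε_p(s)` is triggered. -/
theorem psregm_pruning_triggered {ι : Type*} {S : ι → Type*}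
    [DecidableEq ι] [Fintype ι] [Nonempty ι]
    [∀ i, Fintype (S i)] [∀ i, Nonempty (S i)]
    (u uh : ι → (∀ q, S q) → ℝ) (εb : ι → (∀ q, S q) → ℝ)
    (p : ι) (s : ∀ q, S q) (ε : ℝ) (hε : 0 ≤ ε)
    (hεb : ∀ s' : ∀ q, S q, (∀ q, q ≠ p → s' q = s q) → 0 ≤ εb p s')
    (h : ∀ s' : ∀ q, S q, (∀ q, q ≠ p → s' q = s q) → |u p s' - uh p s'| ≤ εb p s')
    (hgap : 5 * (⨆ t : S p, εb p (Function.update s p t)) < Reg u p s - ε) :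
    ε + εb p s < RegLow uh εb p s := by
  set M := ⨆ t : S p, εb p (Function.update s p t) with hM
  have hadj : ∀ t : S p, ∀ q, q ≠ p → Function.update s p t q = s q := by
    intro t q hq; exact Function.update_of_ne hq _ _
  have hbdd1 : BddAbove (Set.range fun t : S p => εb p (Function.update s p t)) :=
    Set.Finite.bddAbove (Set.finite_range _)
  have hMle : ∀ t : S p, εb p (Function.update s p t) ≤ M := fun t => le_ciSup hbdd1 t
  have hεs : εb p s ≤ M := by
    have := hMle (s p); rwa [Function.update_eq_self] at this
  have h1 : (⨆ t : S p, u p (Function.update s p t)) ≤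
      (⨆ t : S p, (uh p (Function.update s p t) - εb p (Function.update s p t))) + 2 * M := by
    apply ciSup_le
    intro t
    have ha := abs_le.1 (h _ (hadj t))
    have hle : uh p (Function.update s p t) - εb p (Function.update s p t) ≤
        ⨆ t : S p, (uh p (Function.update s p t) - εb p (Function.update s p t)) :=
      le_ciSup (f := fun t : S p => uh p (Function.update s p t) - εb p (Function.update s p t)) (Set.Finite.bddAbove (Set.finite_range _)) t
    have hm := hMle t
    linarith [ha.1, ha.2]
  have h2 : uh p s + εb p s ≤ u p s + 2 * M := by
    have ha := abs_le.1 (h s (fun q hq => rfl))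
    linarith [ha.1, ha.2]
  unfold RegLow
  unfold Reg at hgap
  linarith
end

section
/- Let c > 0, L > 0, v̂ ≥ 0 and ε > 0 be real numbers, and let m be a real number with m > 1. Define ε^V = 2c²L/(3m) + √((1/3 + 1/(2L)) · (c²L/(m−1))² + 2c²v̂L/m) and ε^B = cL/(3m) + √(2(v̂ + ε^V)L/m). If ε^B ≤ ε, then m > (1/3 + √((4 + 2√3)/3)) · cL/ε. -/
/-- Sample complexity lower bound for the empirical Bennett bound: if the
empirical Bennett utility-error bound `εB` is at most `ε`, then the sample size
`m` exceeds `(1/3 + √((4 + 2√3)/3)) · cL/ε`. -/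
theorem empirical_bennett_sample_lower_bound
    (c L vhat ε m εV εB : ℝ)
    (hc : 0 < c) (hL : 0 < L) (hv : 0 ≤ vhat) (hε : 0 < ε) (hm : 1 < m)
    (hεV : εV = 2 * c ^ 2 * L / (3 * m) +
      Real.sqrt ((1 / 3 + 1 / (2 * L)) * (c ^ 2 * L / (m - 1)) ^ 2 +
        2 * c ^ 2 * vhat * L / m))
    (hεB : εB = c * L / (3 * m) + Real.sqrt (2 * (vhat + εV) * L / m))
    (h : εB ≤ ε) :
    (1 / 3 + Real.sqrt ((4 + 2 * Real.sqrt 3) / 3)) * c * L / ε < m := by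
  have hm0 : (0:ℝ) < m := by linarith
  have hm1 : (0:ℝ) < m - 1 := by linarith
  set s3 := Real.sqrt 3 with hs3
  have hs3sq : s3 ^ 2 = 3 := Real.sq_sqrt (by norm_num)
  have hs3pos : 0 < s3 := Real.sqrt_pos.mpr (by norm_num)
  set sK := Real.sqrt ((4 + 2 * s3) / 3) with hsK
  have hsKsq : sK ^ 2 = (4 + 2 * s3) / 3 := Real.sq_sqrt (by positivity)
  have hsKpos : 0 < sK := Real.sqrt_pos.mpr (by positivity)
  -- Step 1: strict lower bound on εV
  have hεVlb : (2/3 + s3/3) * (c^2 * L / m) < εV := by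
    have h1 : c^2 * L / m < c^2 * L / (m - 1) := by
      apply div_lt_div_of_pos_left (by positivity) hm1 (by linarith)
    have h2 : (c^2 * L / m)^2 < (c^2 * L / (m - 1))^2 := by
      have hx : 0 < c^2 * L / m := by positivity
      nlinarith [h1, hx]
    have key : (s3/3 * (c^2 * L / m)) ^ 2 <
        (1 / 3 + 1 / (2 * L)) * (c ^ 2 * L / (m - 1)) ^ 2 +
          2 * c ^ 2 * vhat * L / m := by
      have e : (s3/3 * (c^2 * L / m)) ^ 2 = (1/3) * (c^2 * L / m)^2 := by
        rw [mul_pow, div_pow, hs3sq]; ring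
      have h3 : 0 < 1 / (2 * L) := by positivity
      have h4 : 0 ≤ 2 * c ^ 2 * vhat * L / m := by positivity
      have h5 : 0 < (c ^ 2 * L / (m - 1)) ^ 2 := by positivity
      nlinarith [h2, mul_pos h3 h5]
    have hlt : s3/3 * (c^2 * L / m) < Real.sqrt ((1 / 3 + 1 / (2 * L)) *
        (c ^ 2 * L / (m - 1)) ^ 2 + 2 * c ^ 2 * vhat * L / m) :=
      (Real.lt_sqrt (by positivity)).mpr key
    have e2 : 2 * c ^ 2 * L / (3 * m) = (2/3) * (c^2 * L / m) := by ring
    rw [hεV]; linarith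
  -- Step 2: strict lower bound on εB
  have hεBlb : (1/3 + sK) * (c * L / m) < εB := by
    have key : (sK * (c * L / m)) ^ 2 < 2 * (vhat + εV) * L / m := by
      have e : (sK * (c * L / m)) ^ 2 = (4 + 2*s3)/3 * (c * L / m)^2 := by
        rw [mul_pow, hsKsq]
      have h2Lm : 0 < 2 * L / m := by positivity
      have hmul := mul_lt_mul_of_pos_right hεVlb h2Lm
      have e1 : (2/3 + s3/3) * (c^2 * L / m) * (2 * L / m)
          = (4 + 2*s3)/3 * (c * L / m)^2 := by ring
      have e2 : 2 * (vhat + εV) * L / m = εV * (2 * L / m) + vhat * (2 * L / m) := by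
        ring
      have e3 : 0 ≤ vhat * (2 * L / m) := by positivity
      linarith
    have hlt : sK * (c * L / m) < Real.sqrt (2 * (vhat + εV) * L / m) :=
      (Real.lt_sqrt (by positivity)).mpr key
    have e4 : c * L / (3 * m) = (1/3) * (c * L / m) := by ring
    rw [hεB]; linarith
  -- Conclusion
  have hfin : (1/3 + sK) * c * L < ε * m := by
    have e : (1/3 + sK) * (c * L / m) = ((1/3 + sK) * c * L) / m := by ring
    have : ((1/3 + sK) * c * L) / m < ε := by linarith
    rwa [div_lt_iff₀ hm0] at this
  rw [div_lt_iff₀ hε]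
  nlinarith [hfin]
end

section
/- Let û be a utility function on a finite normal-form game structure, fix a player p and a pure profile s, and let c > 0. Suppose there is a real number a such that û_p(s') ∈ [a, a + c] for every s' ∈ Adj_{p,s}, and suppose ε_p(s') > c/2 for every s' ∈ Adj_{p,s}. Then Reg↓_p(s; û, ε) < 0. (Consequently, no regret pruning with criterion Reg↓ > 0 can occur before some utility deviation bound drops to c/2 or below.) -/
/-- If the empirical utilities on the adjacent set lie in an interval of length
`c` and every adjacent error bound exceeds `c/2`, then the empirical regret
lower bound is negative, so no regret pruning with criterion `Reg↓ > 0` can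
occur. -/
theorem no_early_regret_pruning {ι : Type*} {S : ι → Type*}
    [DecidableEq ι] [Fintype ι] [Nonempty ι]
    [∀ i, Fintype (S i)] [∀ i, Nonempty (S i)]
    (uh : ι → (∀ q, S q) → ℝ) (εb : ι → (∀ q, S q) → ℝ)
    (p : ι) (s : ∀ q, S q) (c : ℝ) (hc : 0 < c) (a : ℝ)
    (hbound : ∀ s' : ∀ q, S q, (∀ q, q ≠ p → s' q = s q) →
      uh p s' ∈ Set.Icc a (a + c))
    (hεb : ∀ s' : ∀ q, S q, (∀ q, q ≠ p → s' q = s q) → c / 2 < εb p s') :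
    RegLow uh εb p s < 0 := by
  have hadj : ∀ t : S p, ∀ q, q ≠ p → Function.update s p t q = s q := by
    intro t q hq; simp [Function.update_of_ne hq]
  have hterm : ∀ t : S p,
      uh p (Function.update s p t) - εb p (Function.update s p t) < a + c / 2 := by
    intro t
    have h1 := (hbound _ (hadj t)).2
    have h2 := hεb _ (hadj t)
    linarith
  obtain ⟨t₀, ht₀⟩ := Finite.exists_max
    (fun t : S p => uh p (Function.update s p t) - εb p (Function.update s p t))
  have hsup : (⨆ t : S p, (uh p (Function.update s p t) - εb p (Function.update s p t)))
      ≤ uh p (Function.update s p t₀) - εb p (Function.update s p t₀) :=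
    ciSup_le ht₀
  have hself : ∀ q, q ≠ p → s q = s q := fun _ _ => rfl
  have h3 := (hbound s hself).1
  have h4 := hεb s hself
  have h5 := hterm t₀
  unfold RegLow
  linarith
end

section
/- There exist a finite normal-form game structure with two players, utility functions u, û⁽¹⁾, û⁽²⁾ on it, and real numbers ε̂⁽¹⁾ ≥ ε̂⁽²⁾ = ε > 0, such that: (i) |u_p(s) − û⁽ᵗ⁾_p(s)| ≤ ε̂⁽ᵗ⁾ for every player p, every profile s, and t ∈ {1, 2}; (ii) some player p and profile s satisfy the regret-pruning criterion Reg_p(s; û⁽¹⁾) ≥ 2ε̂⁽¹⁾; and (iii) defining the final empirical utilities û by û_p(s) = û⁽¹⁾_p(s) for the pruned index (p, s) from (ii) and û_q(s') = û⁽²⁾_q(s') for all other player–profile pairs, it holds that E_{2ε}(û) is not contained in E_{4ε}(u). (This refutes the claimed dual containment E_{2ε}(û) ⊆ E_{4ε}(u) for progressive sampling with the original regret-pruning criterion.) -/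
lemma bool_iSup (f : Bool → ℝ) : (⨆ t : Bool, f t) = max (f false) (f true) := by
  apply le_antisymm
  · refine ciSup_le fun t => ?_
    cases t
    · exact le_max_left _ _
    · exact le_max_right _ _
  · exact max_le (le_ciSup (Set.finite_range f).bddAbove false)
      (le_ciSup (Set.finite_range f).bddAbove true)

/-- Counterexample to the claimed dual containment for progressive sampling with
the original regret-pruning criterion: there is a two-player game (players
indexed by `Bool`), a true utility function `u`, empirical estimates `û⁽¹⁾, û⁽²⁾`
accurate to within `ε̂⁽¹⁾ ≥ ε̂⁽²⁾ = ε > 0` respectively, such that some index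
`(p₀, s₀)` satisfies the regret-pruning criterion `Reg_{p₀}(s₀; û⁽¹⁾) ≥ 2ε̂⁽¹⁾`,
yet the final empirical utilities `û` (taking the value of `û⁽¹⁾` at the pruned
index and of `û⁽²⁾` elsewhere) satisfy `E_{2ε}(û) ⊄ E_{4ε}(u)`. -/
theorem regret_pruning_counterexample :
    ∃ (S : Bool → Type) (instF : ∀ i, Fintype (S i)) (instN : ∀ i, Nonempty (S i))
      (u u1 u2 uh : Bool → (∀ q, S q) → ℝ)
      (εhat1 εhat2 ε : ℝ) (p₀ : Bool) (s₀ : ∀ q, S q),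
      εhat2 ≤ εhat1 ∧ εhat2 = ε ∧ 0 < ε ∧
      (∀ (p : Bool) (s : ∀ q, S q), |u p s - u1 p s| ≤ εhat1) ∧
      (∀ (p : Bool) (s : ∀ q, S q), |u p s - u2 p s| ≤ εhat2) ∧
      2 * εhat1 ≤ @Reg Bool S instDecidableEqBool instF instN u1 p₀ s₀ ∧
      uh p₀ s₀ = u1 p₀ s₀ ∧
      (∀ (p : Bool) (s : ∀ q, S q), ¬(p = p₀ ∧ s = s₀) → uh p s = u2 p s) ∧
      ¬ (@PNE Bool S instDecidableEqBool instF instN uh (2 * ε) ⊆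
          @PNE Bool S instDecidableEqBool instF instN u (4 * ε)) := by
  classical
  set s₀ : ∀ _ : Bool, Bool := fun _ => false with hs₀
  refine ⟨fun _ => Bool, fun _ => inferInstance, fun _ => inferInstance,
    (fun p s => if p then (if s true then 9 else 0) else 0),
    (fun p s => if p then (if s true then 15 else 3) else 0),
    (fun p s => if p then (if s true then 7 else 0) else 0),
    (fun p s => if p = true ∧ s = s₀ then (if s true then 15 else 3) else
      if p then (if s true then 7 else 0) else 0),
    6, 2, 2, true, s₀, ?_, rfl, ?_, ?_, ?_, ?_, ?_, ?_, ?_⟩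
  · norm_num
  · norm_num
  · intro p s
    cases p <;> rcases h : s true <;> norm_num [h]
  · intro p s
    cases p <;> rcases h : s true <;> norm_num [h]
  · -- Reg u1 true s₀ = 12
    have hupd : ∀ t : Bool, Function.update s₀ true t true = t := by
      intro t; simp
    rw [Reg, bool_iSup]
    rw [hupd, hupd]
    norm_num [hs₀]
  · -- uh p₀ s₀ = u1 p₀ s₀
    simp
  · -- uh = u2 off the pruned index
    intro p s h
    simp only [if_neg h]
  · -- ¬ subset
    intro hsub
    have hmem : s₀ ∈ PNE (fun p s => if p = true ∧ s = s₀ then (if s true then 15 else 3) else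
        if p then (if s true then 7 else 0) else 0) (2 * 2) := by
      intro p
      have hne : Function.update s₀ true true ≠ s₀ := by
        intro h
        have := congrFun h true
        simp at this
      have heq : Function.update s₀ true false = s₀ := by
        funext q; cases q <;> simp [hs₀]
      cases p
      · rw [Reg, bool_iSup]
        have h1 : ∀ t : Bool, Function.update s₀ false t true = false := by
          intro t; simp [hs₀]
        have h2 : ∀ t : Bool, Function.update s₀ false t = s₀ ↔ t = false := by
          intro t
          constructor
          · intro h; have := congrFun h false; simpa using this
          · rintro rfl; funext q; cases q <;> simp [hs₀]
        rcases em (Function.update s₀ false false = s₀) with hc | hc <;>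
        rcases em (Function.update s₀ false true = s₀) with hc' | hc' <;>
          simp [hc, hc', h1, hs₀]
      · rw [Reg, bool_iSup]
        have hu1 : Function.update s₀ true false true = false := by simp
        have hu2 : Function.update s₀ true true true = true := by simp
        simp [heq, hne, hu1, hu2, hs₀]
        norm_num
    have := hsub hmem true
    rw [Reg, bool_iSup] at this
    have hu1 : Function.update s₀ true false true = false := by simp
    have hu2 : Function.update s₀ true true true = true := by simp
    simp [hu1, hu2, hs₀] at this
    norm_num at this
end
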